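/- arXiv:1912.04740 — 6 statements merged into one kernel-verified Lean document; each statement's English description precedes it below -/
import Mathlib

section
/- Let n ≥ 1, let V be a finite nonempty type, and let β : V → V → ZMod n → ℂ. Define the lift matrix L : Matrix (V × ZMod n) (V × ZMod n) ℂ by L (u,i) (v,j) = β u v (j − i), and for each m : ZMod n define B_m : Matrix V V ℂ by (B_m) u v = Σ_{s : ZMod n} Complex.exp(2·π·Complex.I·(m.val · s.val)/n) · β u v s. Then the characteristic polynomial of L equals the product over all m : ZMod n of the characteristic polynomials of B_m; in particular, the multiset of eigenvalues (with multiplicity) of the lift matrix is the union over the n characters of ZMod n of the spectra of the character images of the base matrix. -/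
open Matrix Polynomial Kronecker

theorem myCharpolyBlockDiagonal {o m R : Type*} [Fintype o] [DecidableEq o] [Fintype m]
    [DecidableEq m] [CommRing R] (M : o → Matrix m m R) :
    (Matrix.blockDiagonal M).charpoly = ∏ k : o, (M k).charpoly := by
  have h : (Matrix.blockDiagonal M).charmatrix
      = Matrix.blockDiagonal (fun k => (M k).charmatrix) := by
    ext ⟨i, k⟩ ⟨j, l⟩
    by_cases hkl : k = l
    · subst hkl
      by_cases hij : i = j <;>
        simp [Matrix.charmatrix_apply, Matrix.blockDiagonal_apply, Matrix.diagonal_apply,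
          Prod.ext_iff, hij]
    · simp [Matrix.charmatrix_apply, Matrix.blockDiagonal_apply, Matrix.diagonal_apply,
        Prod.ext_iff, hkl]
  rw [Matrix.charpoly, h, Matrix.det_blockDiagonal]
  rfl

theorem myCharpolyConj {m R : Type*} [Fintype m] [DecidableEq m] [CommRing R] [IsDomain R]
    (A D P : Matrix m m R) (hP : P.det ≠ 0) (h : A * P = P * D) :
    A.charpoly = D.charpoly := by
  have key : A.charmatrix * P.map C = P.map C * D.charmatrix := by
    rw [Matrix.charmatrix, Matrix.charmatrix]
    simp only [RingHom.mapMatrix_apply]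
    rw [sub_mul, mul_sub, ← Matrix.map_mul, h, Matrix.map_mul]
    congr 1
    exact (Matrix.scalar_commute (X : R[X]) (fun r => Commute.all _ _) (P.map C)).eq
  have hdet := congrArg Matrix.det key
  rw [Matrix.det_mul, Matrix.det_mul] at hdet
  have hC : (P.map (C : R →+* R[X])).det = C P.det := (RingHom.map_det C P).symm
  rw [hC] at hdet
  have hCne : (C P.det : R[X]) ≠ 0 := fun hc => hP (C_injective (by simpa using hc))
  rw [Matrix.charpoly, Matrix.charpoly]
  rw [mul_comm] at hdet
  exact mul_left_cancel₀ hCne hdet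

/-- Theorem 3.1 of the paper, specialized to ordinary voltage assignments in the cyclic
group `ℤ_n`: the characteristic polynomial of the lift matrix is the product, over the
`n` characters of `ZMod n`, of the characteristic polynomials of the character images
of the base matrix. -/
theorem charpoly_lift_zmod (n : ℕ) [NeZero n] (hn : 1 ≤ n)
    (V : Type) [Fintype V] [Nonempty V] [DecidableEq V]
    (β : V → V → ZMod n → ℂ)
    (L : Matrix (V × ZMod n) (V × ZMod n) ℂ)
    (hL : ∀ (u v : V) (i j : ZMod n), L (u, i) (v, j) = β u v (j - i))
    (B : ZMod n → Matrix V V ℂ)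
    (hB : ∀ (m : ZMod n) (u v : V), B m u v =
      ∑ s : ZMod n,
        Complex.exp (2 * Real.pi * Complex.I * ((m.val : ℂ) * (s.val : ℂ)) / (n : ℂ)) *
          β u v s) :
    L.charpoly = ∏ m : ZMod n, (B m).charpoly := by
  classical
  set ζ : ℂ := Complex.exp (2 * Real.pi * Complex.I / n) with hζdef
  have hζ : IsPrimitiveRoot ζ n := Complex.isPrimitiveRoot_exp n (NeZero.ne n)
  have hζn : ζ ^ n = 1 := hζ.pow_eq_one
  have hpow : ∀ a : ℕ, ζ ^ a = ζ ^ (a % n) := by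
    intro a
    conv_lhs => rw [← Nat.div_add_mod a n]
    rw [pow_add, pow_mul, hζn, one_pow, one_mul]
  have hexp : ∀ a : ℕ, Complex.exp (2 * Real.pi * Complex.I * (a : ℂ) / n) = ζ ^ a := by
    intro a
    rw [hζdef, ← Complex.exp_nat_mul]
    congr 1
    ring
  have hfval : ∀ i m : ZMod n, ζ ^ (i * m).val = ζ ^ (i.val * m.val) := by
    intro i m
    rw [ZMod.val_mul, ← hpow]
  have hB' : ∀ (m : ZMod n) (u v : V), B m u v = ∑ s : ZMod n, ζ ^ (s * m).val * β u v s := by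
    intro m u v
    rw [hB]
    refine Finset.sum_congr rfl fun s _ => ?_
    congr 1
    have h1 : ((m.val : ℂ) * (s.val : ℂ)) = ((m.val * s.val : ℕ) : ℂ) := by push_cast; ring
    rw [h1, hexp (m.val * s.val), ← hfval m s, mul_comm m s]
  have hadd : ∀ a b m : ZMod n, ζ ^ ((a + b) * m).val = ζ ^ (a * m).val * ζ ^ (b * m).val := by
    intro a b m
    rw [add_mul, ZMod.val_add, ← hpow, pow_add]
  -- the Fourier matrix and the change-of-basis matrix
  set W : Matrix (ZMod n) (ZMod n) ℂ := Matrix.of (fun i m => ζ ^ (i * m).val) with hWdef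
  set P : Matrix (V × ZMod n) (V × ZMod n) ℂ :=
    Matrix.kroneckerMap (· * ·) (1 : Matrix V V ℂ) W with hPdef
  have hPapply : ∀ (u : V) (i : ZMod n) (v : V) (m : ZMod n),
      P (u, i) (v, m) = (if u = v then 1 else 0) * ζ ^ (i * m).val := by
    intro u i v m
    simp [hPdef, Matrix.kroneckerMap_apply, Matrix.one_apply, hWdef]
  -- invertibility of the Fourier matrix
  have hdetW : W.det ≠ 0 := by
    let e : ZMod n ≃ Fin n :=
      ⟨fun a => ⟨a.val, ZMod.val_lt a⟩, fun a => ((a : ℕ) : ZMod n),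
        fun a => by simp [ZMod.natCast_zmod_val],
        fun a => by ext; simp [ZMod.val_natCast_of_lt a.isLt]⟩
    have hre : Matrix.reindex e e W = Matrix.vandermonde (fun a : Fin n => ζ ^ (a : ℕ)) := by
      ext a b
      have ha : (e.symm a : ZMod n).val = (a : ℕ) := ZMod.val_natCast_of_lt a.isLt
      have hb : (e.symm b : ZMod n).val = (b : ℕ) := ZMod.val_natCast_of_lt b.isLt
      simp only [Matrix.reindex_apply, Matrix.submatrix_apply, hWdef, Matrix.of_apply,
        Matrix.vandermonde_apply]
      rw [hfval, ha, hb, pow_mul]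
    have hdet : W.det = (Matrix.vandermonde (fun a : Fin n => ζ ^ (a : ℕ))).det := by
      rw [← hre, Matrix.det_reindex_self]
    rw [hdet, Matrix.det_vandermonde]
    refine Finset.prod_ne_zero_iff.2 fun i _ => Finset.prod_ne_zero_iff.2 fun j hj => ?_
    have hij : i < j := Finset.mem_Ioi.1 hj
    refine sub_ne_zero.2 fun hc => ?_
    exact absurd (hζ.pow_inj j.isLt i.isLt hc) (by omega)
  have hdetP : P.det ≠ 0 := by
    rw [hPdef, Matrix.det_kronecker, Matrix.det_one, one_pow, one_mul]
    exact pow_ne_zero _ hdetW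
  -- the intertwining identity L * P = P * blockDiagonal B
  have hLP : L * P = P * Matrix.blockDiagonal B := by
    ext ⟨u, i⟩ ⟨v, m⟩
    rw [Matrix.mul_apply, Matrix.mul_apply, Fintype.sum_prod_type, Fintype.sum_prod_type]
    have lhs_eq : ∀ w : V, ∑ j : ZMod n, L (u, i) (w, j) * P (w, j) (v, m)
        = if w = v then ∑ j : ZMod n, β u v (j - i) * ζ ^ (j * m).val else 0 := by
      intro w
      split_ifs with h
      · subst h
        refine Finset.sum_congr rfl fun j _ => ?_
        rw [hL, hPapply, if_pos rfl, one_mul]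
      · refine Finset.sum_eq_zero fun j _ => ?_
        rw [hPapply, if_neg h, zero_mul, mul_zero]
    have rhs_eq : ∀ w : V, ∑ k : ZMod n, P (u, i) (w, k) * Matrix.blockDiagonal B (w, k) (v, m)
        = if u = w then ζ ^ (i * m).val * B m w v else 0 := by
      intro w
      split_ifs with h
      · subst h
        have : ∀ k : ZMod n, P (u, i) (u, k) * Matrix.blockDiagonal B (u, k) (v, m)
            = if k = m then ζ ^ (i * k).val * B k u v else 0 := by
          intro k
          rw [hPapply, if_pos rfl, one_mul, Matrix.blockDiagonal_apply]
          split_ifs with hk <;> simp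
        rw [Finset.sum_congr rfl fun k _ => this k, Finset.sum_ite_eq' Finset.univ m
          (fun k => ζ ^ (i * k).val * B k u v), if_pos (Finset.mem_univ m)]
      · refine Finset.sum_eq_zero fun k _ => ?_
        rw [hPapply, if_neg h, zero_mul, zero_mul]
    rw [Finset.sum_congr rfl fun w _ => lhs_eq w, Finset.sum_congr rfl fun w _ => rhs_eq w,
      Finset.sum_ite_eq' Finset.univ v (fun _ => ∑ j : ZMod n, β u v (j - i) * ζ ^ (j * m).val),
      if_pos (Finset.mem_univ v),
      Finset.sum_ite_eq Finset.univ u (fun w => ζ ^ (i * m).val * B m w v),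
      if_pos (Finset.mem_univ u)]
    -- now an honest computation of the remaining sums
    have reidx : ∑ j : ZMod n, β u v (j - i) * ζ ^ (j * m).val
        = ∑ s : ZMod n, β u v s * (ζ ^ (s * m).val * ζ ^ (i * m).val) := by
      rw [← Equiv.sum_comp (Equiv.addRight i)
        (fun j => β u v (j - i) * ζ ^ (j * m).val)]
      refine Finset.sum_congr rfl fun s _ => ?_
      simp only [Equiv.coe_addRight, add_sub_cancel_right]
      rw [hadd]
    rw [reidx, hB' m u v, Finset.mul_sum]
    refine Finset.sum_congr rfl fun s _ => ?_
    ring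
  have := myCharpolyConj L (Matrix.blockDiagonal B) P hdetP hLP
  rw [this, myCharpolyBlockDiagonal]
end

section
/- Let n ≥ 1, let V be a finite nonempty type, let β : V → V → ZMod n → ℂ, and let c₁, c₂, c₃, c₄ : ℂ. Define: the lift matrix L : Matrix (V × ZMod n) (V × ZMod n) ℂ by L (u,i) (v,j) = β u v (j − i); the degree function deg : V → ℂ by deg u = Σ_v Σ_s β u v s; the lifted degree matrix D̃ : Matrix (V × ZMod n) (V × ZMod n) ℂ, diagonal with D̃ (u,i) (u,i) = deg u; the universal adjacency matrix of the lift U := c₁·L + c₂·D̃ + c₃·1 + c₄·J, where J is the all-ones matrix on V × ZMod n; for m : ZMod n, the character images B_m : Matrix V V ℂ, (B_m) u v = Σ_s exp(2·π·Complex.I·(m.val·s.val)/n) · β u v s; the base degree matrix D : Matrix V V ℂ, diagonal with D u u = deg u; and the all-ones matrix J_V on V. Then the characteristic polynomial of U equals the characteristic polynomial of c₁·B₀ + c₂·D + c₃·1 + c₄·(n:ℂ)·J_V times the product over all m ≠ 0 of the characteristic polynomials of c₁·B_m + c₂·D + c₃·1. -/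
/-! The lift matrix of a voltage assignment in a finite abelian group `G` is block-circulant:
conjugating it by `1 ⊗ X`, with `X` the character table of `G`, gives the block-diagonal matrix
whose blocks are the images `∑ s, ψ s • β s` of the base matrix under the characters `ψ`, and `X`
is invertible by the orthogonality relations. The universal adjacency matrix of the lift is itself
a lift matrix: the lifted degree matrix and the identity come from voltage-`0` loops, and `J` from
the constant weight `1`, whose character image is `|G| • J_V` for the trivial character and `0`
otherwise. -/

open Matrix
open scoped Kronecker

namespace Matrix

variable {n R : Type*} [Fintype n] [DecidableEq n] [CommRing R]

theorem charpoly_eq_of_mul_eq_mul {A B P Q : Matrix n n R} (hQP : Q * P = 1)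
    (h : A * P = P * B) : A.charpoly = B.charpoly := by
  have hB : B = Q * (A * P) := by rw [h, ← Matrix.mul_assoc, hQP, Matrix.one_mul]
  rw [hB, charpoly_mul_comm, Matrix.mul_assoc, mul_eq_one_comm.mp hQP, Matrix.mul_one]

theorem charmatrix_blockDiagonal {ι : Type*} [Fintype ι] [DecidableEq ι] (M : ι → Matrix n n R) :
    charmatrix (blockDiagonal M) = blockDiagonal fun k => charmatrix (M k) := by
  ext ⟨i, k⟩ ⟨j, l⟩
  rcases eq_or_ne k l with rfl | hkl
  · rcases eq_or_ne i j with rfl | hij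
    · simp
    · rw [charmatrix_apply_ne _ _ _ (by simpa using hij), blockDiagonal_apply_eq,
        blockDiagonal_apply_eq, charmatrix_apply_ne _ _ _ hij]
  · simp [charmatrix_apply_ne _ _ _ (by simp [hkl] : (i, k) ≠ (j, l)),
      blockDiagonal_apply_ne _ _ _ hkl]

theorem charpoly_blockDiagonal {ι : Type*} [Fintype ι] [DecidableEq ι] (M : ι → Matrix n n R) :
    (blockDiagonal M).charpoly = ∏ k, (M k).charpoly := by
  rw [charpoly, charmatrix_blockDiagonal, det_blockDiagonal]
  rfl

end Matrix

section VoltageLift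

variable {V G R : Type*} [AddCommGroup G] [DecidableEq G] [CommRing R]

def liftMatrix (β : V → V → G → R) : Matrix (V × G) (V × G) R :=
  of fun p q => β p.1 q.1 (q.2 - p.2)

def charImage [Fintype G] (β : V → V → G → R) (ψ : AddChar G R) : Matrix V V R :=
  of fun u v => ∑ s, ψ s * β u v s

def charTable (χ : G → AddChar G R) : Matrix G G R :=
  of fun i m => χ m i

theorem liftMatrix_mul_kronecker_charTable [Fintype V] [DecidableEq V] [Fintype G]
    (β : V → V → G → R) (χ : G → AddChar G R) :
    liftMatrix β * (1 ⊗ₖ charTable χ) =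
      (1 ⊗ₖ charTable χ) * blockDiagonal fun m => charImage β (χ m) := by
  ext ⟨u, i⟩ ⟨v, m⟩
  simp only [mul_apply, Fintype.sum_prod_type, kronecker_apply, one_apply, liftMatrix, charTable,
    charImage, blockDiagonal_apply, of_apply, ite_mul, one_mul, zero_mul, mul_ite, mul_zero,
    Finset.sum_ite_irrel, Finset.sum_const_zero, Finset.sum_ite_eq', Finset.sum_ite_eq,
    Finset.mem_univ, if_true, Finset.mul_sum]
  refine Fintype.sum_equiv (Equiv.subRight i) _ _ fun j => ?_
  rw [Equiv.subRight_apply, ← mul_assoc, ← AddChar.map_add_eq_mul, add_sub_cancel, mul_comm]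

theorem invCharTable_mul_charTable {K : Type*} [Field K] [Fintype G] {χ : G → AddChar G K}
    (hχ : Function.Injective χ) (hG : (Fintype.card G : K) ≠ 0) :
    (of fun m j => (Fintype.card G : K)⁻¹ * χ m (-j)) * charTable χ = 1 := by
  ext m m'
  have horth : ∑ j, χ m (-j) * χ m' j = if m = m' then (Fintype.card G : K) else 0 := by
    simp_rw [← AddChar.inv_apply, ← AddChar.mul_apply, AddChar.sum_eq_ite]
    exact if_congr (inv_mul_eq_one.trans hχ.eq_iff) rfl rfl
  simp only [mul_apply, of_apply, charTable, mul_assoc, ← Finset.mul_sum, horth, one_apply]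
  split_ifs <;> simp [hG]

theorem charpoly_liftMatrix {K : Type*} [Field K] [Fintype V] [DecidableEq V] [Fintype G]
    {χ : G → AddChar G K} (hχ : Function.Injective χ) (hG : (Fintype.card G : K) ≠ 0)
    (β : V → V → G → K) :
    (liftMatrix β).charpoly = ∏ m, (charImage β (χ m)).charpoly := by
  have hinv : (1 ⊗ₖ of fun m j => (Fintype.card G : K)⁻¹ * χ m (-j)) * (1 ⊗ₖ charTable χ) =
      (1 : Matrix (V × G) (V × G) K) := by
    rw [← mul_kronecker_mul, Matrix.one_mul, invCharTable_mul_charTable hχ hG, one_kronecker_one]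
  rw [charpoly_eq_of_mul_eq_mul hinv (liftMatrix_mul_kronecker_charTable β χ),
    charpoly_blockDiagonal]

def universalWeight (β : V → V → G → R) (A : Matrix V V R) (c₁ c₄ : R) : V → V → G → R :=
  fun u v s => c₁ * β u v s + (if s = 0 then A u v else 0) + c₄

theorem universal_eq_liftMatrix_universalWeight [DecidableEq V] (β : V → V → G → R) (deg : V → R)
    (c₁ c₂ c₃ c₄ : R) :
    c₁ • liftMatrix β + c₂ • diagonal (fun p : V × G => deg p.1) + c₃ • 1 +
        c₄ • of (fun _ _ => 1) =
      liftMatrix (universalWeight β (c₂ • diagonal deg + c₃ • 1) c₁ c₄) := by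
  ext ⟨u, i⟩ ⟨v, j⟩
  simp only [liftMatrix, universalWeight, Matrix.add_apply, Matrix.smul_apply, of_apply,
    diagonal_apply, one_apply, smul_eq_mul, mul_one]
  rcases eq_or_ne u v with rfl | huv
  · rcases eq_or_ne i j with rfl | hij
    · simp [add_assoc]
    · simp [hij, sub_eq_zero, Ne.symm hij]
  · simp [huv]

theorem charImage_universalWeight [Fintype G] (β : V → V → G → R) (A : Matrix V V R)
    (c₁ c₄ : R) (ψ : AddChar G R) :
    charImage (universalWeight β A c₁ c₄) ψ =
      c₁ • charImage β ψ + A + (c₄ * ∑ s, ψ s) • of (fun _ _ => 1) := by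
  ext u v
  simp only [charImage, universalWeight, Matrix.add_apply, Matrix.smul_apply, of_apply,
    smul_eq_mul, mul_add, Finset.sum_add_distrib, mul_ite, mul_zero, Finset.sum_ite_eq',
    Finset.mem_univ, if_true, AddChar.map_zero_eq_one, one_mul, mul_one]
  simp only [mul_left_comm _ c₁, ← Finset.mul_sum, ← Finset.sum_mul]
  ring

theorem charpoly_universal_lift {K : Type*} [Field K] [Fintype V] [DecidableEq V] [Fintype G]
    {χ : G → AddChar G K} (hχ : Function.Injective χ) (hG : (Fintype.card G : K) ≠ 0)
    (β : V → V → G → K) (deg : V → K) (c₁ c₂ c₃ c₄ : K) :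
    (c₁ • liftMatrix β + c₂ • diagonal (fun p : V × G => deg p.1) + c₃ • 1 +
        c₄ • of (fun _ _ => 1)).charpoly =
      ∏ m, (c₁ • charImage β (χ m) + c₂ • diagonal deg + c₃ • 1 +
        (c₄ * ∑ s, χ m s) • of (fun _ _ => 1)).charpoly := by
  rw [universal_eq_liftMatrix_universalWeight, charpoly_liftMatrix hχ hG]
  simp only [charImage_universalWeight, add_assoc]

end VoltageLift

namespace ZMod

variable {n : ℕ} [NeZero n]

theorem mulShift_stdAddChar_apply (m s : ZMod n) :
    (stdAddChar (N := n)).mulShift m s =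
      Complex.exp (2 * Real.pi * Complex.I * ((m.val : ℂ) * (s.val : ℂ)) / (n : ℂ)) := by
  have : m * s = ((m.val * s.val : ℕ) : ℤ) := by push_cast; simp
  rw [AddChar.mulShift_apply, this, stdAddChar_coe]
  push_cast
  rfl

theorem injective_mulShift_stdAddChar :
    Function.Injective (stdAddChar (N := n)).mulShift :=
  AddChar.to_mulShift_inj_of_isPrimitive (isPrimitive_stdAddChar n)

theorem sum_mulShift_stdAddChar (m : ZMod n) :
    ∑ s, (stdAddChar (N := n)).mulShift m s = if m = 0 then (n : ℂ) else 0 := by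
  rw [AddChar.sum_eq_ite, ZMod.card]
  exact if_congr (injective_mulShift_stdAddChar.eq_iff' (AddChar.mulShift_zero _)) rfl rfl

end ZMod

theorem charpoly_universal_lift_zmod_general (n : ℕ) [NeZero n]
    (V : Type) [Fintype V] [DecidableEq V]
    (β : V → V → ZMod n → ℂ) (c₁ c₂ c₃ c₄ : ℂ)
    (L : Matrix (V × ZMod n) (V × ZMod n) ℂ)
    (hL : ∀ (u v : V) (i j : ZMod n), L (u, i) (v, j) = β u v (j - i))
    (deg : V → ℂ)
    (D' : Matrix (V × ZMod n) (V × ZMod n) ℂ)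
    (hD' : D' = Matrix.diagonal fun p : V × ZMod n => deg p.1)
    (J : Matrix (V × ZMod n) (V × ZMod n) ℂ)
    (hJ : ∀ p q : V × ZMod n, J p q = 1)
    (U : Matrix (V × ZMod n) (V × ZMod n) ℂ)
    (hU : U = c₁ • L + c₂ • D' + c₃ • (1 : Matrix (V × ZMod n) (V × ZMod n) ℂ) + c₄ • J)
    (B : ZMod n → Matrix V V ℂ)
    (hB : ∀ (m : ZMod n) (u v : V), B m u v =
      ∑ s : ZMod n,
        Complex.exp (2 * Real.pi * Complex.I * ((m.val : ℂ) * (s.val : ℂ)) / (n : ℂ)) *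
          β u v s)
    (D : Matrix V V ℂ) (hD : D = Matrix.diagonal deg)
    (JV : Matrix V V ℂ) (hJV : ∀ u v : V, JV u v = 1) :
    U.charpoly =
      (c₁ • B 0 + c₂ • D + c₃ • (1 : Matrix V V ℂ) + (c₄ * (n : ℂ)) • JV).charpoly *
        ∏ m ∈ Finset.univ \ {(0 : ZMod n)},
          (c₁ • B m + c₂ • D + c₃ • (1 : Matrix V V ℂ)).charpoly := by
  obtain rfl : L = liftMatrix β := ext fun p q => hL p.1 q.1 p.2 q.2
  obtain rfl : J = of fun _ _ => 1 := ext hJ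
  obtain rfl : JV = of fun _ _ => 1 := ext hJV
  obtain rfl : B = fun m => charImage β ((ZMod.stdAddChar (N := n)).mulShift m) := by
    ext m u v
    simp only [hB, charImage, of_apply, ZMod.mulShift_stdAddChar_apply]
  subst hU hD' hD
  rw [charpoly_universal_lift ZMod.injective_mulShift_stdAddChar (by simp [NeZero.ne n]),
    Finset.prod_eq_mul_prod_sdiff_singleton_of_mem (Finset.mem_univ (0 : ZMod n))]
  congr 1
  · rw [ZMod.sum_mulShift_stdAddChar, if_pos rfl]
  · refine Finset.prod_congr rfl fun m hm => ?_
    rw [ZMod.sum_mulShift_stdAddChar, if_neg (by simpa using hm), mul_zero, zero_smul, add_zero]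

/-- Theorem 3.1 of the paper for the universal adjacency matrix of a lift, specialized to
ordinary voltage assignments in `ℤ_n`: the characteristic polynomial of the universal
adjacency matrix `U = c₁·L + c₂·D̃ + c₃·I + c₄·J` of the lift equals the characteristic
polynomial of `c₁·B₀ + c₂·D + c₃·I + c₄·n·J_V` (trivial character) times the product over
the nontrivial characters `m ≠ 0` of the characteristic polynomials of
`c₁·B_m + c₂·D + c₃·I`. -/
theorem charpoly_universal_lift_zmod (n : ℕ) [NeZero n] (hn : 1 ≤ n)
    (V : Type) [Fintype V] [Nonempty V] [DecidableEq V]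
    (β : V → V → ZMod n → ℂ) (c₁ c₂ c₃ c₄ : ℂ)
    (L : Matrix (V × ZMod n) (V × ZMod n) ℂ)
    (hL : ∀ (u v : V) (i j : ZMod n), L (u, i) (v, j) = β u v (j - i))
    (deg : V → ℂ) (hdeg : ∀ u : V, deg u = ∑ v : V, ∑ s : ZMod n, β u v s)
    (D' : Matrix (V × ZMod n) (V × ZMod n) ℂ)
    (hD' : D' = Matrix.diagonal fun p : V × ZMod n => deg p.1)
    (J : Matrix (V × ZMod n) (V × ZMod n) ℂ)
    (hJ : ∀ p q : V × ZMod n, J p q = 1)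
    (U : Matrix (V × ZMod n) (V × ZMod n) ℂ)
    (hU : U = c₁ • L + c₂ • D' + c₃ • (1 : Matrix (V × ZMod n) (V × ZMod n) ℂ) + c₄ • J)
    (B : ZMod n → Matrix V V ℂ)
    (hB : ∀ (m : ZMod n) (u v : V), B m u v =
      ∑ s : ZMod n,
        Complex.exp (2 * Real.pi * Complex.I * ((m.val : ℂ) * (s.val : ℂ)) / (n : ℂ)) *
          β u v s)
    (D : Matrix V V ℂ) (hD : D = Matrix.diagonal deg)
    (JV : Matrix V V ℂ) (hJV : ∀ u v : V, JV u v = 1) :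
    U.charpoly =
      (c₁ • B 0 + c₂ • D + c₃ • (1 : Matrix V V ℂ) + (c₄ * (n : ℂ)) • JV).charpoly *
        ∏ m ∈ Finset.univ \ {(0 : ZMod n)},
          (c₁ • B m + c₂ • D + c₃ • (1 : Matrix V V ℂ)).charpoly :=
  charpoly_universal_lift_zmod_general n V β c₁ c₂ c₃ c₄ L hL deg D' hD' J hJ U hU B hB D hD JV hJV
end

section
/- Let G be a finite group, V a finite type, β : V → V → G → ℂ, and let L : Matrix (V × G) (V × G) ℂ be the lift matrix, L (u,g) (v,g') = β u v (g⁻¹ * g'). Let d ≥ 1, let ρ : G →* Matrix (Fin d) (Fin d) ℂ be a matrix representation, and let ρ(B) : Matrix (V × Fin d) (V × Fin d) ℂ be its image of the base matrix, ρ(B) (u,i) (v,j) = Σ_{s ∈ G} (β u v s) · (ρ s) i j. Suppose x : V × Fin d → ℂ and μ : ℂ satisfy ρ(B).mulVec x = μ • x. Then for every j : Fin d, the lifted vector w : V × G → ℂ defined by w (u,g) = Σ_{i : Fin d} (ρ g) j i · x (u,i) satisfies L.mulVec w = μ • w. -/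
/-- Step 3 in the proof of Theorem 3.1: every eigenvector `x` (with eigenvalue `μ`) of the
`ρ`-image of the base matrix lifts, for each row index `j`, to a vector `w` on the lift
with `L.mulVec w = μ • w`. -/
theorem lift_eigenvector (G : Type) [Group G] [Fintype G] [DecidableEq G]
    (V : Type) [Fintype V] [DecidableEq V]
    (β : V → V → G → ℂ)
    (L : Matrix (V × G) (V × G) ℂ)
    (hL : ∀ (u v : V) (g g' : G), L (u, g) (v, g') = β u v (g⁻¹ * g'))
    (d : ℕ) (hd : 1 ≤ d)
    (ρ : G →* Matrix (Fin d) (Fin d) ℂ)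
    (ρB : Matrix (V × Fin d) (V × Fin d) ℂ)
    (hρB : ∀ (u v : V) (i j : Fin d), ρB (u, i) (v, j) = ∑ s : G, β u v s * ρ s i j)
    (x : V × Fin d → ℂ) (μ : ℂ) (hx : ρB.mulVec x = μ • x)
    (j : Fin d)
    (w : V × G → ℂ)
    (hw : ∀ (u : V) (g : G), w (u, g) = ∑ i : Fin d, ρ g j i * x (u, i)) :
    L.mulVec w = μ • w := by
  funext p
  obtain ⟨u, g⟩ := p
  have hxu : ∀ k : Fin d, ∑ v : V, ∑ i : Fin d, ρB (u, k) (v, i) * x (v, i)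
      = μ * x (u, k) := by
    intro k
    have := congrFun hx (u, k)
    simpa [Matrix.mulVec, dotProduct, Fintype.sum_prod_type] using this
  have key : ∑ q : V × G, L (u, g) q * w q = μ * w (u, g) := by
    calc ∑ q : V × G, L (u, g) q * w q
        = ∑ v : V, ∑ s : G, β u v s * ∑ i : Fin d, (ρ g * ρ s) j i * x (v, i) := by
          rw [Fintype.sum_prod_type]
          refine Finset.sum_congr rfl fun v _ => ?_
          refine (Fintype.sum_equiv (Equiv.mulLeft g) _ _ fun s => ?_).symm
          simp [hL, hw, map_mul, Finset.mul_sum]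
      _ = ∑ v : V, ∑ s : G, ∑ i : Fin d, ∑ k : Fin d,
            ρ g j k * (β u v s * ρ s k i * x (v, i)) := by
          refine Finset.sum_congr rfl fun v _ => Finset.sum_congr rfl fun s _ => ?_
          rw [Finset.mul_sum]
          refine Finset.sum_congr rfl fun i _ => ?_
          rw [Matrix.mul_apply, Finset.sum_mul, Finset.mul_sum]
          exact Finset.sum_congr rfl fun k _ => by ring
      _ = ∑ k : Fin d, ∑ v : V, ∑ i : Fin d, ∑ s : G,
            ρ g j k * (β u v s * ρ s k i * x (v, i)) := by
          exact (Finset.sum_congr rfl fun v _ =>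
            Finset.sum_comm.trans
              ((Finset.sum_congr rfl fun i _ => Finset.sum_comm).trans
                Finset.sum_comm)).trans Finset.sum_comm
      _ = ∑ k : Fin d, ρ g j k * ∑ v : V, ∑ i : Fin d, ρB (u, k) (v, i) * x (v, i) := by
          refine Finset.sum_congr rfl fun k _ => ?_
          rw [Finset.mul_sum]
          refine Finset.sum_congr rfl fun v _ => ?_
          rw [Finset.mul_sum]
          refine Finset.sum_congr rfl fun i _ => ?_
          rw [hρB, Finset.sum_mul, Finset.mul_sum]
      _ = μ * w (u, g) := by
          simp only [hxu, hw, Finset.mul_sum]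
          exact Finset.sum_congr rfl fun k _ => by ring
  simpa [Matrix.mulVec, dotProduct] using key
end

section
/- Let G be a finite group, H a subgroup of G, V a finite type, β : V → V → G → ℂ, and let L : Matrix (V × G) (V × G) ℂ be the lift matrix, L (u,g) (v,g') = β u v (g⁻¹ * g'). Let d ≥ 1, let ρ : G →* Matrix (Fin d) (Fin d) ℂ be a matrix representation with ρ-image ρ(B) (u,i) (v,j) = Σ_{s ∈ G} (β u v s) · (ρ s) i j of the base matrix. Suppose x : V × Fin d → ℂ and μ : ℂ satisfy ρ(B).mulVec x = μ • x, and suppose z : Fin d → ℂ satisfies Matrix.vecMul z (ρ h) = z for every h ∈ H. Define w : V × G → ℂ by w (u,g) = Σ_{j,i : Fin d} z j · (ρ g) j i · x (u,i). Then (a) L.mulVec w = μ • w, and (b) w (u, h*g) = w (u,g) for all u : V, g : G, h ∈ H; hence w is constant on the right cosets Hg and descends to an eigenvector, with eigenvalue μ, of the relative lift Γ^β determined by the voltage assignment in G relative to H. -/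
private lemma sum_reorder5 {V G D : Type*} [Fintype V] [Fintype G] [Fintype D]
    (F : V → G → D → D → D → ℂ) :
    ∑ v : V, ∑ s : G, ∑ j : D, ∑ i : D, ∑ k : D, F v s j i k
      = ∑ j : D, ∑ k : D, ∑ v : V, ∑ i : D, ∑ s : G, F v s j i k := by
  have L1 : ∑ v : V, ∑ s : G, ∑ j : D, ∑ i : D, ∑ k : D, F v s j i k
      = ∑ p : V × G × D × D × D, F p.1 p.2.1 p.2.2.1 p.2.2.2.1 p.2.2.2.2 := by
    simp [Fintype.sum_prod_type]
  have R1 : ∑ j : D, ∑ k : D, ∑ v : V, ∑ i : D, ∑ s : G, F v s j i k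
      = ∑ p : D × D × V × D × G, F p.2.2.1 p.2.2.2.2 p.1 p.2.2.2.1 p.2.1 := by
    simp [Fintype.sum_prod_type]
  rw [L1, R1]
  exact Fintype.sum_equiv
    ⟨fun p => (p.2.2.1, p.2.2.2.2, p.1, p.2.2.2.1, p.2.1),
     fun p => (p.2.2.1, p.2.2.2.2, p.1, p.2.2.2.1, p.2.1),
     fun _ => rfl, fun _ => rfl⟩ _ _ (fun _ => rfl)


/-- Step 3 in the proof of Theorem 3.1 for relative lifts: if `x` is an eigenvector of the
`ρ`-image of the base matrix with eigenvalue `μ`, and `z` is a row vector fixed by `ρ(h)`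
for all `h ∈ H`, then the lifted vector `w (u,g) = Σ_{j,i} z j · (ρ g) j i · x (u,i)` is an
eigenvector of the lift matrix `L` with eigenvalue `μ`, and `w` is constant on the right
cosets `Hg` of each fiber, hence descends to an eigenvector of the relative lift. -/
theorem relative_lift_eigenvector (G : Type) [Group G] [Fintype G] [DecidableEq G]
    (H : Subgroup G)
    (V : Type) [Fintype V] [DecidableEq V]
    (β : V → V → G → ℂ)
    (L : Matrix (V × G) (V × G) ℂ)
    (hL : ∀ (u v : V) (g g' : G), L (u, g) (v, g') = β u v (g⁻¹ * g'))
    (d : ℕ) (hd : 1 ≤ d)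
    (ρ : G →* Matrix (Fin d) (Fin d) ℂ)
    (ρB : Matrix (V × Fin d) (V × Fin d) ℂ)
    (hρB : ∀ (u v : V) (i j : Fin d), ρB (u, i) (v, j) = ∑ s : G, β u v s * ρ s i j)
    (x : V × Fin d → ℂ) (μ : ℂ) (hx : ρB.mulVec x = μ • x)
    (z : Fin d → ℂ) (hz : ∀ h ∈ H, Matrix.vecMul z (ρ h) = z)
    (w : V × G → ℂ)
    (hw : ∀ (u : V) (g : G),
      w (u, g) = ∑ j : Fin d, ∑ i : Fin d, z j * ρ g j i * x (u, i)) :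
    L.mulVec w = μ • w ∧ ∀ (u : V) (g : G), ∀ h ∈ H, w (u, h * g) = w (u, g) := by
  have hxk : ∀ (u : V) (k : Fin d),
      (∑ v : V, ∑ i : Fin d, (∑ s : G, β u v s * ρ s k i) * x (v, i)) = μ * x (u, k) := by
    intro u k
    have := congrFun hx (u, k)
    simpa [Matrix.mulVec, dotProduct, Fintype.sum_prod_type, hρB] using this
  constructor
  · funext p
    obtain ⟨u, g⟩ := p
    have step1 : L.mulVec w (u, g)
        = ∑ v : V, ∑ s : G, ∑ j : Fin d, ∑ i : Fin d, ∑ k : Fin d,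
            β u v s * z j * ρ g j k * ρ s k i * x (v, i) := by
      simp only [Matrix.mulVec, dotProduct, Fintype.sum_prod_type]
      refine Finset.sum_congr rfl fun v _ => ?_
      rw [← Equiv.sum_comp (Equiv.mulLeft g)]
      simp only [Equiv.coe_mulLeft, hL, hw, inv_mul_cancel_left, map_mul,
        Matrix.mul_apply, Finset.mul_sum, Finset.sum_mul]
      refine Finset.sum_congr rfl fun s _ => Finset.sum_congr rfl fun j _ =>
        Finset.sum_congr rfl fun i _ => Finset.sum_congr rfl fun k _ => by ring
    have step2 : (μ • w) (u, g)
        = ∑ j : Fin d, ∑ k : Fin d, ∑ v : V, ∑ i : Fin d, ∑ s : G,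
            β u v s * z j * ρ g j k * ρ s k i * x (v, i) := by
      have : (μ • w) (u, g) = ∑ j : Fin d, ∑ k : Fin d, z j * ρ g j k * (μ * x (u, k)) := by
        simp only [Pi.smul_apply, smul_eq_mul, hw, Finset.mul_sum]
        exact Finset.sum_congr rfl fun j _ => Finset.sum_congr rfl fun k _ => by ring
      rw [this]
      refine Finset.sum_congr rfl fun j _ => Finset.sum_congr rfl fun k _ => ?_
      rw [← hxk u k, Finset.mul_sum]
      refine Finset.sum_congr rfl fun v _ => ?_
      rw [Finset.mul_sum]
      refine Finset.sum_congr rfl fun i _ => ?_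
      rw [Finset.sum_mul, Finset.mul_sum]
      exact Finset.sum_congr rfl fun s _ => by ring
    rw [step1, step2]
    exact sum_reorder5 _
  · intro u g h hh
    have hzρ := congrFun (hz h hh)
    simp only [Matrix.vecMul, dotProduct] at hzρ
    simp only [hw, map_mul, Matrix.mul_apply]
    rw [Finset.sum_comm]
    calc ∑ i : Fin d, ∑ j : Fin d, z j * (∑ k : Fin d, ρ h j k * ρ g k i) * x (u, i)
        = ∑ i : Fin d, (∑ k : Fin d, (∑ j : Fin d, z j * ρ h j k) * ρ g k i) * x (u, i) := by
          refine Finset.sum_congr rfl fun i _ => ?_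
          rw [← Finset.sum_mul]
          refine congrArg (· * x (u, i)) ?_
          simp only [Finset.mul_sum, Finset.sum_mul]
          rw [Finset.sum_comm]
          exact Finset.sum_congr rfl fun k _ => Finset.sum_congr rfl fun j _ => by ring
      _ = ∑ i : Fin d, (∑ k : Fin d, z k * ρ g k i) * x (u, i) := by
          simp only [hzρ]
      _ = ∑ j : Fin d, ∑ i : Fin d, z j * ρ g j i * x (u, i) := by
          rw [Finset.sum_comm]
          simp [Finset.sum_mul]
end

section
/- Let G be a finite group, V a finite type, β : V → V → G → ℂ, and let L : Matrix (V × G) (V × G) ℂ be the lift matrix, L (u,g) (v,g') = β u v (g⁻¹ * g'). Let d ≥ 1 and let ρ : G →* Matrix (Fin d) (Fin d) ℂ be a matrix representation satisfying Σ_{g ∈ G} ρ g = 0, with ρ-image ρ(B) (u,i) (v,j) = Σ_{s ∈ G} (β u v s) · (ρ s) i j of the base matrix. Suppose x : V × Fin d → ℂ and λ : ℂ satisfy ρ(B).mulVec x = λ • x, fix j : Fin d, and let w : V × G → ℂ be the lifted vector w (u,g) = Σ_{i : Fin d} (ρ g) j i · x (u,i). Then the Seidel matrix of the lift, S := J − 2·L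 − 1 (J the all-ones matrix on V × G, 1 the identity), satisfies S.mulVec w = (−2·λ − 1) • w. -/
/-- Mechanism behind the paper's final Lemma: if `ρ` satisfies `Σ_g ρ(g) = 0`, then any
lifted eigenvector `w` (with adjacency eigenvalue `λ`) of the lift matrix `L` is an
eigenvector of the Seidel matrix `S = J − 2L − I` of the lift, with eigenvalue `−2λ − 1`. -/
theorem seidel_eigenvector_of_lift (G : Type) [Group G] [Fintype G] [DecidableEq G]
    (V : Type) [Fintype V] [DecidableEq V]
    (β : V → V → G → ℂ)
    (L : Matrix (V × G) (V × G) ℂ)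
    (hL : ∀ (u v : V) (g g' : G), L (u, g) (v, g') = β u v (g⁻¹ * g'))
    (d : ℕ) (hd : 1 ≤ d)
    (ρ : G →* Matrix (Fin d) (Fin d) ℂ)
    (hρ : ∑ g : G, ρ g = 0)
    (ρB : Matrix (V × Fin d) (V × Fin d) ℂ)
    (hρB : ∀ (u v : V) (i j : Fin d), ρB (u, i) (v, j) = ∑ s : G, β u v s * ρ s i j)
    (x : V × Fin d → ℂ) (lam : ℂ) (hx : ρB.mulVec x = lam • x)
    (j : Fin d)
    (w : V × G → ℂ)
    (hw : ∀ (u : V) (g : G), w (u, g) = ∑ i : Fin d, ρ g j i * x (u, i))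
    (J : Matrix (V × G) (V × G) ℂ) (hJ : ∀ p q : V × G, J p q = 1)
    (S : Matrix (V × G) (V × G) ℂ)
    (hS : S = J - 2 • L - (1 : Matrix (V × G) (V × G) ℂ)) :
    S.mulVec w = (-2 * lam - 1) • w := by
  have hρ0 : ∀ k i : Fin d, ∑ g : G, ρ g k i = 0 := by
    intro k i
    have := congrFun (congrFun hρ k) i
    simpa [Matrix.sum_apply] using this
  have hJw : J.mulVec w = 0 := by
    funext p
    simp only [Matrix.mulVec, dotProduct, hJ, one_mul, Pi.zero_apply]
    rw [Fintype.sum_prod_type]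
    have : ∀ v : V, ∑ g : G, w (v, g) = 0 := by
      intro v
      simp only [hw]
      rw [Finset.sum_comm]
      simp [← Finset.sum_mul, hρ0]
    simp [this]
  have hx' : ∀ u k, ∑ v : V, ∑ i : Fin d, (∑ s : G, β u v s * ρ s k i) * x (v, i)
      = lam * x (u, k) := by
    intro u k
    have := congrFun hx (u, k)
    simpa [Matrix.mulVec, dotProduct, Fintype.sum_prod_type, hρB] using this
  have hLw : L.mulVec w = lam • w := by
    funext p
    obtain ⟨u, g⟩ := p
    simp only [Matrix.mulVec, dotProduct, Pi.smul_apply, smul_eq_mul]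
    rw [Fintype.sum_prod_type]
    have reindex : ∀ v : V, ∑ g' : G, L (u, g) (v, g') * w (v, g')
        = ∑ s : G, β u v s * w (v, g * s) := by
      intro v
      rw [← Equiv.sum_comp (Equiv.mulLeft g)]
      simp [hL, Equiv.mulLeft]
    simp only [reindex]
    have key : ∀ v s, β u v s * w (v, g * s)
        = ∑ i : Fin d, ∑ k : Fin d, ρ g j k * (β u v s * ρ s k i * x (v, i)) := by
      intro v s
      rw [hw]
      simp only [map_mul, Matrix.mul_apply, Finset.mul_sum, Finset.sum_mul]
      exact Finset.sum_congr rfl fun i _ => Finset.sum_congr rfl fun k _ => by ring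
    simp only [key]
    have rearr : ∀ f : V → G → Fin d → Fin d → ℂ,
        ∑ v : V, ∑ s : G, ∑ i : Fin d, ∑ k : Fin d, f v s i k
          = ∑ k : Fin d, ∑ v : V, ∑ i : Fin d, ∑ s : G, f v s i k := by
      intro f
      have inner : ∀ v : V, ∑ s : G, ∑ i : Fin d, ∑ k : Fin d, f v s i k
          = ∑ k : Fin d, ∑ i : Fin d, ∑ s : G, f v s i k := by
        intro v
        rw [Finset.sum_comm]
        rw [show (∑ i : Fin d, ∑ s : G, ∑ k : Fin d, f v s i k)
            = ∑ i : Fin d, ∑ k : Fin d, ∑ s : G, f v s i k from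
          Finset.sum_congr rfl fun i _ => Finset.sum_comm]
        rw [Finset.sum_comm]
      simp only [inner]
      rw [Finset.sum_comm]
    calc ∑ v : V, ∑ s : G, ∑ i : Fin d, ∑ k : Fin d,
            ρ g j k * (β u v s * ρ s k i * x (v, i))
        = ∑ k : Fin d, ρ g j k * ∑ v : V, ∑ i : Fin d,
            (∑ s : G, β u v s * ρ s k i) * x (v, i) := by
          rw [rearr]
          refine Finset.sum_congr rfl fun k _ => ?_
          rw [Finset.mul_sum]
          refine Finset.sum_congr rfl fun v _ => ?_
          rw [Finset.mul_sum]
          refine Finset.sum_congr rfl fun i _ => ?_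
          rw [Finset.sum_mul, Finset.mul_sum]
      _ = ∑ k : Fin d, ρ g j k * (lam * x (u, k)) := by
          simp only [hx']
      _ = lam * w (u, g) := by
          rw [hw, Finset.mul_sum]
          refine Finset.sum_congr rfl fun k _ => ?_
          ring
  subst hS
  rw [Matrix.sub_mulVec, Matrix.sub_mulVec, hJw, Matrix.smul_mulVec, hLw,
    Matrix.one_mulVec]
  funext p
  simp only [Pi.sub_apply, Pi.smul_apply, Pi.zero_apply, smul_eq_mul]
  ring
end

section
/- Let G be a finite group, V a finite nonempty type, β : V → V → G → ℂ, and let L : Matrix (V × G) (V × G) ℂ be the lift matrix, L (u,g) (v,g') = β u v (g⁻¹ * g'). Let B̂ : Matrix V V ℂ be the trivial-representation image of the base matrix, B̂ u v = Σ_{s ∈ G} β u v s. Then the characteristic polynomial of B̂ divides the characteristic polynomial of L; in particular every eigenvalue of B̂ is an eigenvalue of the lift matrix with at least the same multiplicity. -/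
open Polynomial Matrix

lemma my_charpoly_conj {n : Type*} [Fintype n] [DecidableEq n] (A P Q : Matrix n n ℂ)
    (hQP : Q * P = 1) : (Q * A * P).charpoly = A.charpoly := by
  have hm : charmatrix (Q * A * P) =
      Q.map Polynomial.C * charmatrix A * P.map Polynomial.C := by
    unfold charmatrix
    rw [Matrix.mul_sub, Matrix.sub_mul]
    congr 1
    · rw [← (Matrix.scalar_commute Polynomial.X (fun r => Commute.all _ _)
        (Q.map Polynomial.C)).eq, Matrix.mul_assoc, ← Matrix.map_mul, hQP,
        Matrix.map_one _ (map_zero _) (map_one _), Matrix.mul_one]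
    · simp only [RingHom.mapMatrix_apply, ← Matrix.map_mul, Matrix.mul_assoc]
  have hdet : (Q.map Polynomial.C).det * (P.map Polynomial.C).det = 1 := by
    rw [← Matrix.det_mul, ← Matrix.map_mul, hQP, Matrix.map_one _ (map_zero _) (map_one _),
      Matrix.det_one]
  unfold Matrix.charpoly
  rw [hm, Matrix.det_mul, Matrix.det_mul, mul_right_comm, hdet, one_mul]



/-- Contribution of the trivial irreducible representation in Theorem 3.1: the
characteristic polynomial of the trivial-representation image `B̂` of the base matrix
divides the characteristic polynomial of the lift matrix `L`. -/
theorem charpoly_trivial_image_dvd_charpoly_lift (G : Type) [Group G] [Fintype G]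
    [DecidableEq G]
    (V : Type) [Fintype V] [Nonempty V] [DecidableEq V]
    (β : V → V → G → ℂ)
    (L : Matrix (V × G) (V × G) ℂ)
    (hL : ∀ (u v : V) (g g' : G), L (u, g) (v, g') = β u v (g⁻¹ * g'))
    (Bhat : Matrix V V ℂ) (hBhat : ∀ u v : V, Bhat u v = ∑ s : G, β u v s) :
    Bhat.charpoly ∣ L.charpoly := by
  classical
  -- change of basis matrices
  set P : Matrix (V × G) (V × G) ℂ :=
    fun p q => if q.2 = 1 then (if p.1 = q.1 then (1:ℂ) else 0)
      else (if p = q then 1 else 0) with hP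
  set Q : Matrix (V × G) (V × G) ℂ :=
    fun p q => (if p.2 = 1 then (if q = (p.1, 1) then (1:ℂ) else 0)
      else (if q = p then 1 else 0) - (if q = (p.1, 1) then 1 else 0)) with hQ
  have hQP : Q * P = 1 := by
    ext ⟨u, g⟩ ⟨v, h⟩
    rw [Matrix.mul_apply]
    by_cases hg : g = 1
    · subst hg
      simp only [hP, hQ, if_true, ite_mul, one_mul, zero_mul]
      rw [Finset.sum_ite_eq' Finset.univ ((u, 1) : V × G)]
      simp only [Finset.mem_univ, if_true, Matrix.one_apply, Prod.mk.injEq]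
      by_cases hh : h = 1 <;> simp [hh, Prod.ext_iff, eq_comm]
    · simp only [hP, hQ, hg, if_false, sub_mul, ite_mul, one_mul, zero_mul,
        Finset.sum_sub_distrib]
      rw [Finset.sum_ite_eq' Finset.univ ((u, g) : V × G),
          Finset.sum_ite_eq' Finset.univ ((u, 1) : V × G)]
      simp only [Finset.mem_univ, if_true, Matrix.one_apply, Prod.mk.injEq]
      by_cases hh : h = 1
      · subst hh
        simp [hg, Prod.ext_iff]
      · simp [hh, Prod.ext_iff, eq_comm]
  -- M := Q * L * P
  set M : Matrix (V × G) (V × G) ℂ := Q * L * P with hM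
  have hLP : ∀ (w : V) (k : G) (v : V) (h : G),
      (L * P) (w, k) (v, h) = if h = 1 then Bhat w v else L (w, k) (v, h) := by
    intro w k v h
    rw [Matrix.mul_apply]
    by_cases hh : h = 1
    · subst hh
      simp only [hP, if_true, mul_ite, mul_one, mul_zero]
      rw [Fintype.sum_prod_type_right]
      simp only [Finset.sum_ite_eq', Finset.mem_univ, if_true]
      rw [hBhat]
      exact Fintype.sum_equiv (Equiv.mulLeft k⁻¹) _ _ (fun m => by rw [hL]; rfl)
    · simp only [hP, hh, if_false, mul_ite, mul_one, mul_zero]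
      rw [Finset.sum_ite_eq' Finset.univ ((v, h) : V × G)]
      simp [hh]
  have hMe : ∀ (u : V) (g : G) (v : V) (h : G),
      M (u, g) (v, h) = if g = 1 then (L * P) (u, 1) (v, h)
        else (L * P) (u, g) (v, h) - (L * P) (u, 1) (v, h) := by
    intro u g v h
    rw [hM, Matrix.mul_assoc, Matrix.mul_apply]
    by_cases hg : g = 1
    · subst hg
      simp only [hQ, if_true, ite_mul, one_mul, zero_mul]
      rw [Finset.sum_ite_eq' Finset.univ ((u, 1) : V × G)]
      simp
    · simp only [hQ, hg, if_false, sub_mul, ite_mul, one_mul, zero_mul,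
        Finset.sum_sub_distrib]
      rw [Finset.sum_ite_eq' Finset.univ ((u, g) : V × G),
          Finset.sum_ite_eq' Finset.univ ((u, 1) : V × G)]
      simp [hg]
  -- reindex along V ⊕ V × {g // g ≠ 1}
  let e : (V ⊕ V × {g : G // g ≠ 1}) ≃ V × G :=
    { toFun := fun x => Sum.elim (fun v => (v, 1)) (fun p => (p.1, p.2.1)) x
      invFun := fun p => if h : p.2 = 1 then Sum.inl p.1 else Sum.inr (p.1, ⟨p.2, h⟩)
      left_inv := by
        rintro (v | ⟨v, g, hg⟩)
        · simp
        · simp [hg]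
      right_inv := by
        rintro ⟨v, g⟩
        by_cases hg : g = 1 <;> simp [hg] }
  set M' := M.submatrix e e with hM'
  have hb11 : M'.toBlocks₁₁ = Bhat := by
    ext u v
    simp only [Matrix.toBlocks₁₁, Matrix.of_apply, hM', Matrix.submatrix_apply]
    show M (u, 1) (v, 1) = Bhat u v
    rw [hMe, if_pos rfl, hLP, if_pos rfl]
  have hb21 : M'.toBlocks₂₁ = 0 := by
    ext ⟨u, g, hg⟩ v
    simp only [Matrix.toBlocks₂₁, Matrix.of_apply, hM', Matrix.submatrix_apply,
      Matrix.zero_apply]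
    show M (u, g) (v, 1) = 0
    rw [hMe, if_neg hg, hLP, if_pos rfl, hLP, if_pos rfl, sub_self]
  have hblocks : M' = Matrix.fromBlocks Bhat (M'.toBlocks₁₂) 0 (M'.toBlocks₂₂) := by
    conv_lhs => rw [← Matrix.fromBlocks_toBlocks M']
    rw [hb11, hb21]
  have h1 : L.charpoly = M.charpoly := (my_charpoly_conj L P Q hQP).symm
  have h2 : M.charpoly = M'.charpoly := by
    rw [hM', ← Matrix.charpoly_reindex e.symm M]
    rfl
  rw [h1, h2, hblocks, Matrix.charpoly_fromBlocks_zero₂₁]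
  exact Dvd.intro _ rfl
end
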